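/- arXiv:1901.05134 — 4 statements merged into one kernel-verified Lean document; each statement's English description precedes it below -/
import Mathlib

section
/- (Convergence under Case 3.) Suppose Assumptions 1, 3 and 4 hold. Fix w ∈ ℝ^d with g = ∇f(w) ≠ 0, set H = ∇²f(w) and H_i = ∇²f_i(w); fix any G ≥ ‖g‖ and set L = ((1/m)∑_{i=1}^m K_i)² + ((1/m)∑_{i=1}^m L_i)·G. Let φ, θ > 0 and let I = {i : ⟨(H_i² + φ²I)⁻¹H_i g, Hg⟩ < θ‖g‖²} be non-empty. For i ∉ I let p_i = −(H_i² + φ²I)⁻¹H_i g; for i ∈ I let p_i = −(H_i² + φ²I)⁻¹H_i g − λ_i(H_i² + φ²I)⁻¹Hg, where λ_i = (θ‖g‖² − ⟨(H_i² + φ²I)⁻¹H_i g, Hg⟩)/⟨(H_i² + φ²I)⁻¹Hg, Hg⟩ > 0. Let p = (1/m)∑_{i=1}^m p_i, ρ ∈ (0,1), c = 1/φ + (1/m)·(1/φ + θ/(γ√ν))·∑_{i=1}^m √((K_i² + φ²)/φ²), and τ₃ = 2(1−ρ)θ/(Lc²). Then ⟨p, Hg⟩ ≤ −θ‖g‖²,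 and for every α ∈ (0, τ₃]: ‖∇f(w + αp)‖² ≤ ‖g‖² + 2αρ⟨p, Hg⟩ ≤ (1 − 2αρθ)‖g‖²; in particular ‖∇f(w + τ₃p)‖² ≤ (1 − 2τ₃ρθ)‖g‖². Moreover, for any θ > 0 one has 0 ≤ 1 − 2τ₃ρθ < 1. -/
open scoped RealInnerProductSpace

/-- The average function `f = (1/m) ∑ᵢ fᵢ`. -/
noncomputable def avgFun {d m : ℕ} (f : Fin m → EuclideanSpace ℝ (Fin d) → ℝ) :
    EuclideanSpace ℝ (Fin d) → ℝ :=
  fun w => (1 / (m : ℝ)) * ∑ i, f i w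

/-- The gradient `∇f` of the average function. -/
noncomputable def gradF {d m : ℕ} (f : Fin m → EuclideanSpace ℝ (Fin d) → ℝ)
    (w : EuclideanSpace ℝ (Fin d)) : EuclideanSpace ℝ (Fin d) :=
  gradient (avgFun f) w

/-- The Hessian `∇²f` of the average function, as a continuous linear map. -/
noncomputable def hessF {d m : ℕ} (f : Fin m → EuclideanSpace ℝ (Fin d) → ℝ)
    (w : EuclideanSpace ℝ (Fin d)) :
    EuclideanSpace ℝ (Fin d) →L[ℝ] EuclideanSpace ℝ (Fin d) :=
  fderiv ℝ (gradient (avgFun f)) w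

/-- The Hessian `∇²fᵢ` of a single function, as a continuous linear map. -/
noncomputable def hessI {d : ℕ} (g : EuclideanSpace ℝ (Fin d) → ℝ)
    (w : EuclideanSpace ℝ (Fin d)) :
    EuclideanSpace ℝ (Fin d) →L[ℝ] EuclideanSpace ℝ (Fin d) :=
  fderiv ℝ (gradient g) w

/-- The Lipschitz constant `L = ((1/m)∑Kᵢ)² + ((1/m)∑Lᵢ)·G`. -/
noncomputable def Lconst {m : ℕ} (K L : Fin m → ℝ) (G : ℝ) : ℝ :=
  ((1 / (m : ℝ)) * ∑ i, K i) ^ 2 + ((1 / (m : ℝ)) * ∑ i, L i) * G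

/-- The regularized operator `H̃ᵀH̃ = H² + φ²I`. -/
noncomputable def Mreg {d : ℕ}
    (H : EuclideanSpace ℝ (Fin d) →L[ℝ] EuclideanSpace ℝ (Fin d)) (φ : ℝ) :
    EuclideanSpace ℝ (Fin d) →L[ℝ] EuclideanSpace ℝ (Fin d) :=
  H * H + φ ^ 2 • 1

section DingoAux
variable {d m : ℕ}
local notation "E" => EuclideanSpace ℝ (Fin d)

lemma bound_sq {X G c : ℝ} (h : X ^ 2 + c ≤ X * G) (hc : 0 ≤ c) : X ^ 2 + c ≤ G ^ 2 := by
  nlinarith [sq_nonneg (X - G)]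

lemma bound_sq2 {X G c : ℝ} (h : X ^ 2 + c ≤ X * G) : c ≤ G ^ 2 := by
  nlinarith [sq_nonneg (2 * X - G)]

lemma sq_le_imp {a b : ℝ} (ha : 0 ≤ a) (hb : 0 ≤ b) (h : a ^ 2 ≤ b ^ 2) : a ≤ b := by
  nlinarith

lemma contDiff_gradient' {φ : E → ℝ} (hφ : ContDiff ℝ 2 φ) :
    ContDiff ℝ 1 (gradient φ) := by
  have h1 : ContDiff ℝ 1 (fderiv ℝ φ) := hφ.fderiv_right (by norm_num)
  exact (ContinuousLinearMap.contDiff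
    ((InnerProductSpace.toDual ℝ E).symm.toContinuousLinearEquiv.toContinuousLinearMap)).comp h1

lemma hasFDerivAt_gradient' {φ : E → ℝ} (hφ : ContDiff ℝ 2 φ) (x : E) :
    HasFDerivAt (gradient φ) (hessI φ x) x :=
  (((contDiff_gradient' hφ).differentiable one_ne_zero) x).hasFDerivAt

lemma hessI_symm {φ : E → ℝ} (hφ : ContDiff ℝ 2 φ) (x u v : E) :
    ⟪hessI φ x u, v⟫ = ⟪u, hessI φ x v⟫ := by
  have hd : DifferentiableAt ℝ (fderiv ℝ φ) x :=
    ((hφ.fderiv_right (m := 1) (by norm_num)).differentiable one_ne_zero) x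
  set L := ((InnerProductSpace.toDual ℝ E).symm.toContinuousLinearEquiv.toContinuousLinearMap) with hL
  have hcomp : HasFDerivAt (gradient φ)
      (L.comp (fderiv ℝ (fderiv ℝ φ) x)) x := L.hasFDerivAt.comp x hd.hasFDerivAt
  have he : hessI φ x = L.comp (fderiv ℝ (fderiv ℝ φ) x) := hcomp.fderiv
  have hsym := ((hφ.contDiffAt (x := x)).isSymmSndFDerivAt (by norm_num)) u v
  have key : ∀ a b : E, ⟪hessI φ x a, b⟫ = fderiv ℝ (fderiv ℝ φ) x a b := by
    intro a b
    rw [he]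
    simp only [ContinuousLinearMap.comp_apply, hL]
    exact InnerProductSpace.toDual_symm_apply
  rw [key u v, hsym, real_inner_comm]; exact (key v u).symm

lemma avg_contDiff (f : Fin m → E → ℝ) (hf : ∀ i, ContDiff ℝ 2 (f i)) :
    ContDiff ℝ 2 (avgFun f) :=
  contDiff_const.mul (ContDiff.sum fun i _ => hf i)

lemma grad_avg (f : Fin m → E → ℝ) (hf : ∀ i, ContDiff ℝ 2 (f i)) (x : E) :
    gradient (avgFun f) x = (1 / (m:ℝ)) • ∑ i, gradient (f i) x := by
  have hsum : HasFDerivAt (fun w : E => ∑ i, f i w) (∑ i, fderiv ℝ (f i) x) x :=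
    HasFDerivAt.fun_sum fun i _ => (((hf i).differentiable (by norm_num)) x).hasFDerivAt
  have h : HasFDerivAt (avgFun f) ((1 / (m:ℝ)) • ∑ i, fderiv ℝ (f i) x) x := by
    unfold avgFun
    simpa [one_div, smul_eq_mul] using hsum.const_mul (1 / (m:ℝ))
  show (InnerProductSpace.toDual ℝ E).symm (fderiv ℝ (avgFun f) x) = _
  rw [h.fderiv, map_smul, map_sum]
  rfl

lemma hess_avg (f : Fin m → E → ℝ) (hf : ∀ i, ContDiff ℝ 2 (f i)) (x : E) :
    hessF f x = (1 / (m:ℝ)) • ∑ i, hessI (f i) x := by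
  have h : HasFDerivAt (gradient (avgFun f)) ((1 / (m:ℝ)) • ∑ i, hessI (f i) x) x := by
    have hsum : HasFDerivAt (fun w : E => ∑ i, gradient (f i) w)
        (∑ i, hessI (f i) x) x :=
      HasFDerivAt.fun_sum fun i _ => hasFDerivAt_gradient' (hf i) x
    have := hsum.fun_const_smul (1 / (m:ℝ))
    apply this.congr_of_eventuallyEq
    filter_upwards [] with y
    rw [grad_avg f hf y]
  exact h.fderiv

lemma Mreg_apply (T : E →L[ℝ] E) (φ : ℝ) (x : E) :
    Mreg T φ x = T (T x) + φ ^ 2 • x := by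
  simp [Mreg, ContinuousLinearMap.mul_apply]

lemma inner_Mreg_self (T : E →L[ℝ] E) (hT : ∀ u v : E, ⟪T u, v⟫ = ⟪u, T v⟫)
    (φ : ℝ) (x : E) : ⟪Mreg T φ x, x⟫ = ‖T x‖ ^ 2 + φ ^ 2 * ‖x‖ ^ 2 := by
  rw [Mreg_apply, inner_add_left, real_inner_smul_left, hT,
    real_inner_self_eq_norm_sq, real_inner_self_eq_norm_sq]

lemma Mreg_injective (T : E →L[ℝ] E) (hT : ∀ u v : E, ⟪T u, v⟫ = ⟪u, T v⟫)
    {φ : ℝ} (hφ : 0 < φ) : Function.Injective (Mreg T φ) := by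
  intro x y hxy
  have h : Mreg T φ (x - y) = 0 := by rw [map_sub, hxy, sub_self]
  have h2 : (0:ℝ) = ‖T (x-y)‖ ^ 2 + φ ^ 2 * ‖x - y‖ ^ 2 := by
    rw [← inner_Mreg_self T hT, h, inner_zero_left]
  have hz : ‖x - y‖ ^ 2 = 0 := by
    by_contra hne
    have hpos : 0 < ‖x - y‖ ^ 2 := lt_of_le_of_ne (sq_nonneg _) (Ne.symm hne)
    nlinarith [sq_nonneg ‖T (x - y)‖, mul_pos (pow_pos hφ 2) hpos]
  exact sub_eq_zero.mp (by rwa [pow_eq_zero_iff (two_ne_zero), norm_eq_zero] at hz)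

lemma isUnit_Mreg (T : E →L[ℝ] E) (hT : ∀ u v : E, ⟪T u, v⟫ = ⟪u, T v⟫)
    {φ : ℝ} (hφ : 0 < φ) : IsUnit (Mreg T φ) := by
  have hinj : Function.Injective (Mreg T φ) := Mreg_injective T hT hφ
  have hinj' : Function.Injective ((Mreg T φ) : E →ₗ[ℝ] E) := hinj
  have hsurj : Function.Surjective ((Mreg T φ) : E →ₗ[ℝ] E) :=
    (LinearMap.injective_iff_surjective).mp hinj'
  let e := LinearEquiv.ofBijective ((Mreg T φ) : E →ₗ[ℝ] E) ⟨hinj', hsurj⟩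
  let N := LinearMap.toContinuousLinearMap (e.symm : E →ₗ[ℝ] E)
  refine ⟨⟨Mreg T φ, N, ?_, ?_⟩, rfl⟩
  · refine ContinuousLinearMap.ext fun x => ?_
    rw [ContinuousLinearMap.mul_apply, ContinuousLinearMap.one_apply]
    exact e.apply_symm_apply x
  · refine ContinuousLinearMap.ext fun x => ?_
    rw [ContinuousLinearMap.mul_apply, ContinuousLinearMap.one_apply]
    exact e.symm_apply_apply x

lemma Mreg_selfadj (T : E →L[ℝ] E) (hT : ∀ u v : E, ⟪T u, v⟫ = ⟪u, T v⟫) {φ : ℝ} (u v : E) :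
    ⟪Mreg T φ u, v⟫ = ⟪u, Mreg T φ v⟫ := by
  rw [Mreg_apply, Mreg_apply, inner_add_left, inner_add_right, hT, hT,
    real_inner_smul_left, real_inner_smul_right]

lemma Mreg_inv_right (T : E →L[ℝ] E) (hT : ∀ u v : E, ⟪T u, v⟫ = ⟪u, T v⟫) {φ : ℝ}
    (hφ : 0 < φ) (x : E) : Mreg T φ (Ring.inverse (Mreg T φ) x) = x := by
  have h := Ring.mul_inverse_cancel _ (isUnit_Mreg T hT hφ)
  have := ContinuousLinearMap.ext_iff.mp h x
  rwa [ContinuousLinearMap.mul_apply, ContinuousLinearMap.one_apply] at this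

lemma Minv_selfadj (T : E →L[ℝ] E) (hT : ∀ u v : E, ⟪T u, v⟫ = ⟪u, T v⟫) {φ : ℝ}
    (hφ : 0 < φ) (x y : E) :
    ⟪Ring.inverse (Mreg T φ) x, y⟫ = ⟪x, Ring.inverse (Mreg T φ) y⟫ := by
  conv_lhs => rw [← Mreg_inv_right T hT hφ y]
  rw [← Mreg_selfadj T hT]
  conv_rhs => rw [← Mreg_inv_right T hT hφ x]

lemma inner_Minv_self (T : E →L[ℝ] E) (hT : ∀ u v : E, ⟪T u, v⟫ = ⟪u, T v⟫) {φ : ℝ}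
    (hφ : 0 < φ) (x : E) :
    ⟪Ring.inverse (Mreg T φ) x, x⟫
      = ‖T (Ring.inverse (Mreg T φ) x)‖ ^ 2 + φ ^ 2 * ‖Ring.inverse (Mreg T φ) x‖ ^ 2 := by
  have h := inner_Mreg_self T hT φ (Ring.inverse (Mreg T φ) x)
  rw [Mreg_inv_right T hT hφ x] at h
  rw [real_inner_comm] at h
  exact h

lemma inner_Minv_self_nonneg (T : E →L[ℝ] E) (hT : ∀ u v : E, ⟪T u, v⟫ = ⟪u, T v⟫) {φ : ℝ}
    (hφ : 0 < φ) (x : E) : 0 ≤ ⟪Ring.inverse (Mreg T φ) x, x⟫ := by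
  rw [inner_Minv_self T hT hφ]
  positivity

lemma cs_psd (S : E →L[ℝ] E) (hS : ∀ u v : E, ⟪S u, v⟫ = ⟪u, S v⟫)
    (hpsd : ∀ x : E, 0 ≤ ⟪S x, x⟫) (a b : E) :
    ⟪S a, b⟫ ^ 2 ≤ ⟪S a, a⟫ * ⟪S b, b⟫ := by
  have key : ∀ t : ℝ, 0 ≤ ⟪S b, b⟫ * t ^ 2 + (2 * ⟪S a, b⟫) * t + ⟪S a, a⟫ := by
    intro t
    have h := hpsd (a + t • b)
    have expand : ⟪S (a + t • b), a + t • b⟫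
        = ⟪S b, b⟫ * t ^ 2 + (2 * ⟪S a, b⟫) * t + ⟪S a, a⟫ := by
      rw [map_add, map_smul, inner_add_left, inner_add_right, inner_add_right,
        real_inner_smul_left, real_inner_smul_left, real_inner_smul_right,
        real_inner_smul_right]
      have : ⟪S b, a⟫ = ⟪S a, b⟫ := by rw [hS, real_inner_comm]
      rw [this]; ring
    linarith [expand ▸ h]
  have key' : ∀ t : ℝ, 0 ≤ ⟪S b, b⟫ * (t * t) + (2 * ⟪S a, b⟫) * t + ⟪S a, a⟫ := by
    intro t; have := key t; nlinarith [this]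
  have hd := discrim_le_zero key'
  rw [discrim] at hd
  nlinarith [hd]

lemma Hg_lower (S : E →L[ℝ] E) (hS : ∀ u v : E, ⟪S u, v⟫ = ⟪u, S v⟫)
    {γ ν : ℝ} (hγ : 0 < γ) (hν0 : 0 < ν)
    (hreg : ∀ q ∈ LinearMap.range (S : E →ₗ[ℝ] E), γ * ‖q‖ ≤ ‖S q‖)
    (g : E)
    (hns : ‖g - (Submodule.orthogonalProjectionOnto (LinearMap.range (S : E →ₗ[ℝ] E)) g : E)‖ ^ 2
      ≤ ((1 - ν) / ν) * ‖(Submodule.orthogonalProjectionOnto (LinearMap.range (S : E →ₗ[ℝ] E)) g : E)‖ ^ 2) :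
    γ * Real.sqrt ν * ‖g‖ ≤ ‖S g‖ := by
  set R := LinearMap.range (S : E →ₗ[ℝ] E) with hR
  set P : E := (Submodule.orthogonalProjectionOnto R g : E) with hP
  have hmem : P ∈ R := (Submodule.orthogonalProjectionOnto R g).2
  have horth : ⟪g - P, P⟫ = 0 :=
    Submodule.starProjection_inner_eq_zero (K := R) g P hmem
  have pyth : ‖g‖ ^ 2 = ‖P‖ ^ 2 + ‖g - P‖ ^ 2 := by
    have h := norm_add_sq_real P (g - P)
    have e : P + (g - P) = g := by abel
    rw [e] at h
    rw [real_inner_comm] at horth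
    rw [horth] at h; linarith
  have hP2 : ν * ‖g‖ ^ 2 ≤ ‖P‖ ^ 2 := by
    have h1 : ‖g‖ ^ 2 ≤ ‖P‖ ^ 2 + ((1 - ν) / ν) * ‖P‖ ^ 2 := by linarith
    have h2 : ‖P‖ ^ 2 + ((1 - ν) / ν) * ‖P‖ ^ 2 = ‖P‖ ^ 2 / ν := by
      field_simp; ring
    have h3 : ‖g‖ ^ 2 ≤ ‖P‖ ^ 2 / ν := h2 ▸ h1
    have h4 := (le_div_iff₀ hν0).mp h3
    linarith
  have hperp : g - P ∈ Rᗮ := Submodule.sub_starProjection_mem_orthogonal (K := R) g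
  have hzero : S (g - P) = 0 := by
    have h1 : ⟪S (g - P), S (g - P)⟫ = 0 := by
      rw [hS]
      rw [real_inner_comm]
      exact hperp _ (LinearMap.mem_range_self _ _)
    exact inner_self_eq_zero.mp h1
  have hSg : S g = S P := by
    have h' : S g - S P = 0 := by rw [← map_sub, hzero]
    exact sub_eq_zero.mp h'
  have hsqrt : Real.sqrt ν * ‖g‖ ≤ ‖P‖ := by
    have hsq : (Real.sqrt ν * ‖g‖) ^ 2 ≤ ‖P‖ ^ 2 := by
      rw [mul_pow, Real.sq_sqrt hν0.le]; exact hP2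
    have := Real.sqrt_le_sqrt hsq
    rwa [Real.sqrt_sq (by positivity), Real.sqrt_sq (norm_nonneg _)] at this
  calc γ * Real.sqrt ν * ‖g‖ = γ * (Real.sqrt ν * ‖g‖) := by ring
    _ ≤ γ * ‖P‖ := by nlinarith [hγ]
    _ ≤ ‖S P‖ := hreg P hmem
    _ = ‖S g‖ := by rw [hSg]

lemma taylor_bound {F : E → E} {DF : E → (E →L[ℝ] E)}
    (hd : ∀ x : E, HasFDerivAt F (DF x) x)
    {Lb : ℝ}
    (hlip : ∀ x y : E, ‖DF x - DF y‖ ≤ Lb * ‖x - y‖)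
    (w s : E) : ‖F (w + s) - F w - DF w s‖ ≤ Lb / 2 * ‖s‖ ^ 2 := by
  set ψ : ℝ → E := fun t => F (w + t • s) - F w - t • (DF w s) with hψ
  have hline : ∀ t : ℝ, HasDerivAt (fun u : ℝ => w + u • s) s t := by
    intro t
    simpa using ((hasDerivAt_id t).smul_const s).const_add w
  have hψ' : ∀ t : ℝ, HasDerivAt ψ (DF (w + t • s) s - DF w s) t := by
    intro t
    have h1 : HasDerivAt (fun u : ℝ => F (w + u • s)) (DF (w + t • s) s) t :=
      (hd (w + t • s)).comp_hasDerivAt t (hline t)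
    have h2 : HasDerivAt (fun u : ℝ => u • (DF w s)) (DF w s) t := by
      simpa using (hasDerivAt_id t).smul_const (DF w s)
    simpa [hψ] using (h1.sub_const (F w)).fun_sub h2
  set B : ℝ → ℝ := fun t => Lb * ‖s‖ ^ 2 / 2 * t ^ 2 with hB
  have hB' : ∀ t : ℝ, HasDerivAt B (Lb * ‖s‖ ^ 2 * t) t := by
    intro t
    have h := (hasDerivAt_pow 2 t).const_mul (Lb * ‖s‖ ^ 2 / 2)
    have e : Lb * ‖s‖ ^ 2 * t = Lb * ‖s‖ ^ 2 / 2 * ((2:ℕ) * t ^ 1) := by push_cast; ring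
    rw [e]; exact h
  have bound : ∀ t ∈ Set.Ico (0:ℝ) 1, ‖DF (w + t • s) s - DF w s‖ ≤ Lb * ‖s‖ ^ 2 * t := by
    intro t ht
    have h1 := (DF (w + t • s) - DF w).le_opNorm s
    rw [ContinuousLinearMap.sub_apply] at h1
    have h2 : ‖DF (w + t • s) - DF w‖ ≤ Lb * (t * ‖s‖) := by
      have h3 := hlip (w + t • s) w
      have e : w + t • s - w = t • s := by abel
      rw [e, norm_smul, Real.norm_eq_abs, abs_of_nonneg ht.1] at h3
      linarith [h3]
    calc ‖DF (w + t • s) s - DF w s‖ ≤ ‖DF (w + t • s) - DF w‖ * ‖s‖ := h1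
      _ ≤ Lb * (t * ‖s‖) * ‖s‖ := by
          apply mul_le_mul_of_nonneg_right h2 (norm_nonneg s)
      _ = Lb * ‖s‖ ^ 2 * t := by ring
  have key := image_norm_le_of_norm_deriv_right_le_deriv_boundary
    (f := ψ) (f' := fun t => DF (w + t • s) s - DF w s) (a := 0) (b := 1)
    (B := B) (B' := fun t => Lb * ‖s‖ ^ 2 * t)
    (fun t _ => (hψ' t).continuousAt.continuousWithinAt)
    (fun t _ => (hψ' t).hasDerivWithinAt)
    (by simp [hψ, hB]) (fun t => hB' t) bound
  have h1 := key (Set.right_mem_Icc.mpr zero_le_one)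
  have h2 : ‖F (w + s) - F w - DF w s‖ ≤ Lb * ‖s‖ ^ 2 / 2 * 1 ^ 2 := by
    simpa [hψ, hB] using h1
  nlinarith [h2]

end DingoAux

set_option maxHeartbeats 4000000 in
/-- **Theorem 5 (Convergence under Case 3).** Under Assumptions 1, 3 and 4, with the exact
Case 3 local directions (Lagrangian-corrected on the non-empty index set `I`), the averaged
direction `p` satisfies `⟨p, Hg⟩ ≤ −θ‖g‖²`, each Lagrange multiplier is positive, every
step-size in `(0, τ₃]` with `τ₃ = 2(1−ρ)θ/(Lc²)` passes the line search and yields the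
stated reduction, and `0 ≤ 1 − 2τ₃ρθ < 1` for any `θ > 0`. -/
theorem stmt_15 {d m : ℕ} (hm : 0 < m)
    (f : Fin m → EuclideanSpace ℝ (Fin d) → ℝ)
    (hf : ∀ i, ContDiff ℝ 2 (f i))
    (K L : Fin m → ℝ) (hK : ∀ i, 0 < K i) (hL : ∀ i, 0 < L i)
    (hgrad : ∀ i (x y : EuclideanSpace ℝ (Fin d)),
      ‖gradient (f i) x - gradient (f i) y‖ ≤ K i * ‖x - y‖)
    (hhess : ∀ i (x y : EuclideanSpace ℝ (Fin d)),
      ‖hessI (f i) x - hessI (f i) y‖ ≤ L i * ‖x - y‖)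
    -- Assumption 3: pseudo-inverse regularity of the full Hessian
    (γ : ℝ) (hγ : 0 < γ)
    (hreg : ∀ (u : EuclideanSpace ℝ (Fin d)),
      ∀ q ∈ LinearMap.range (hessF f u : EuclideanSpace ℝ (Fin d) →ₗ[ℝ] EuclideanSpace ℝ (Fin d)), γ * ‖q‖ ≤ ‖hessF f u q‖)
    -- Assumption 4: gradient–Hessian null-space property
    (ν : ℝ) (hν0 : 0 < ν) (hν1 : ν ≤ 1)
    (hns : ∀ u : EuclideanSpace ℝ (Fin d),
      ‖gradF f u - (Submodule.orthogonalProjectionOnto (LinearMap.range (hessF f u : EuclideanSpace ℝ (Fin d) →ₗ[ℝ] EuclideanSpace ℝ (Fin d))) (gradF f u) :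
          EuclideanSpace ℝ (Fin d))‖ ^ 2
        ≤ ((1 - ν) / ν) * ‖(Submodule.orthogonalProjectionOnto (LinearMap.range (hessF f u : EuclideanSpace ℝ (Fin d) →ₗ[ℝ] EuclideanSpace ℝ (Fin d))) (gradF f u) :
          EuclideanSpace ℝ (Fin d))‖ ^ 2)
    (w : EuclideanSpace ℝ (Fin d)) (hgw : gradF f w ≠ 0)
    (G : ℝ) (hG : ‖gradF f w‖ ≤ G)
    (ρ θ φ : ℝ) (hρ0 : 0 < ρ) (hρ1 : ρ < 1) (hθ : 0 < θ) (hφ : 0 < φ)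
    -- the Case 3 index set I is non-empty
    (hI : ∃ i, ⟪Ring.inverse (Mreg (hessI (f i) w) φ) (hessI (f i) w (gradF f w)),
      hessF f w (gradF f w)⟫ < θ * ‖gradF f w‖ ^ 2)
    -- the Lagrange multipliers
    (lam : Fin m → ℝ)
    (hlam : ∀ i, lam i =
      (θ * ‖gradF f w‖ ^ 2 - ⟪Ring.inverse (Mreg (hessI (f i) w) φ)
          (hessI (f i) w (gradF f w)), hessF f w (gradF f w)⟫)
        / ⟪Ring.inverse (Mreg (hessI (f i) w) φ) (hessF f w (gradF f w)),
            hessF f w (gradF f w)⟫)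
    -- the exact Case 3 local directions
    (p : Fin m → EuclideanSpace ℝ (Fin d))
    (hpout : ∀ i, θ * ‖gradF f w‖ ^ 2
        ≤ ⟪Ring.inverse (Mreg (hessI (f i) w) φ) (hessI (f i) w (gradF f w)),
            hessF f w (gradF f w)⟫ →
      p i = -(Ring.inverse (Mreg (hessI (f i) w) φ) (hessI (f i) w (gradF f w))))
    (hpin : ∀ i, ⟪Ring.inverse (Mreg (hessI (f i) w) φ) (hessI (f i) w (gradF f w)),
        hessF f w (gradF f w)⟫ < θ * ‖gradF f w‖ ^ 2 →
      p i = -(Ring.inverse (Mreg (hessI (f i) w) φ) (hessI (f i) w (gradF f w)))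
        - lam i • Ring.inverse (Mreg (hessI (f i) w) φ) (hessF f w (gradF f w)))
    (pbar : EuclideanSpace ℝ (Fin d)) (hpbar : pbar = (1 / (m : ℝ)) • ∑ i, p i)
    (c τ : ℝ)
    (hc : c = 1 / φ + (1 / (m : ℝ)) * (1 / φ + θ / (γ * Real.sqrt ν))
      * ∑ i, Real.sqrt ((K i ^ 2 + φ ^ 2) / φ ^ 2))
    (hτ : τ = 2 * (1 - ρ) * θ / (Lconst K L G * c ^ 2)) :
    (∀ i, ⟪Ring.inverse (Mreg (hessI (f i) w) φ) (hessI (f i) w (gradF f w)),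
        hessF f w (gradF f w)⟫ < θ * ‖gradF f w‖ ^ 2 → 0 < lam i) ∧
    ⟪pbar, hessF f w (gradF f w)⟫ ≤ -θ * ‖gradF f w‖ ^ 2 ∧
    (∀ α : ℝ, 0 < α → α ≤ τ →
      ‖gradF f (w + α • pbar)‖ ^ 2
          ≤ ‖gradF f w‖ ^ 2 + 2 * α * ρ * ⟪pbar, hessF f w (gradF f w)⟫ ∧
      ‖gradF f w‖ ^ 2 + 2 * α * ρ * ⟪pbar, hessF f w (gradF f w)⟫
          ≤ (1 - 2 * α * ρ * θ) * ‖gradF f w‖ ^ 2) ∧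
    ‖gradF f (w + τ • pbar)‖ ^ 2 ≤ (1 - 2 * τ * ρ * θ) * ‖gradF f w‖ ^ 2 ∧
    0 ≤ 1 - 2 * τ * ρ * θ ∧ 1 - 2 * τ * ρ * θ < 1 := by
  have hm' : (m:ℝ) ≠ 0 := Nat.cast_ne_zero.mpr hm.ne'
  have hmpos : (0:ℝ) < m := Nat.cast_pos.mpr hm
  set g : EuclideanSpace ℝ (Fin d) := gradF f w with hgdef
  set H := hessF f w with hHdef
  have hgpos : 0 < ‖g‖ := norm_pos_iff.mpr hgw
  have hGpos : 0 < G := lt_of_lt_of_le hgpos hG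
  have havg : ContDiff ℝ 2 (avgFun f) := avg_contDiff f hf
  have Hsym : ∀ u v : EuclideanSpace ℝ (Fin d), ⟪H u, v⟫ = ⟪u, H v⟫ :=
    fun u v => hessI_symm havg w u v
  have Asym : ∀ i, ∀ u v : EuclideanSpace ℝ (Fin d),
      ⟪hessI (f i) w u, v⟫ = ⟪u, hessI (f i) w v⟫ := fun i => hessI_symm (hf i) w
  have hsν : 0 < Real.sqrt ν := Real.sqrt_pos.mpr hν0
  have hapos : 0 < γ * Real.sqrt ν := mul_pos hγ hsν
  have hHg : γ * Real.sqrt ν * ‖g‖ ≤ ‖H g‖ := Hg_lower H Hsym hγ hν0 (hreg w) g (hns w)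
  have hHgpos : 0 < ‖H g‖ := lt_of_lt_of_le (by positivity) hHg
  have hHgne : H g ≠ 0 := by
    intro h0; rw [h0, norm_zero] at hHgpos; exact lt_irrefl 0 hHgpos
  -- operator norm bounds
  have hAnorm : ∀ i (x : EuclideanSpace ℝ (Fin d)), ‖hessI (f i) w x‖ ≤ K i * ‖x‖ := by
    intro i x
    have hlip : LipschitzWith ((K i).toNNReal) (gradient (f i)) := by
      apply LipschitzWith.of_dist_le_mul
      intro a b
      rw [dist_eq_norm, dist_eq_norm, Real.coe_toNNReal _ (hK i).le]
      exact hgrad i a b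
    have hb : ‖hessI (f i) w‖ ≤ K i := by
      have h2 := norm_fderiv_le_of_lipschitz ℝ hlip (x₀ := w)
      rw [Real.coe_toNNReal _ (hK i).le] at h2
      exact h2
    calc ‖hessI (f i) w x‖ ≤ ‖hessI (f i) w‖ * ‖x‖ := (hessI (f i) w).le_opNorm x
      _ ≤ K i * ‖x‖ := mul_le_mul_of_nonneg_right hb (norm_nonneg x)
  have hMapp : ∀ i (x : EuclideanSpace ℝ (Fin d)),
      ‖Mreg (hessI (f i) w) φ x‖ ≤ (K i ^ 2 + φ ^ 2) * ‖x‖ := by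
    intro i x
    rw [Mreg_apply]
    have h1 := hAnorm i (hessI (f i) w x)
    have h2 := hAnorm i x
    have h3 : ‖φ ^ 2 • x‖ = φ ^ 2 * ‖x‖ := by
      rw [norm_smul, Real.norm_eq_abs, abs_of_nonneg (by positivity)]
    calc ‖hessI (f i) w (hessI (f i) w x) + φ ^ 2 • x‖
        ≤ ‖hessI (f i) w (hessI (f i) w x)‖ + ‖φ ^ 2 • x‖ := norm_add_le _ _
      _ ≤ (K i ^ 2 + φ ^ 2) * ‖x‖ := by
          rw [h3]
          nlinarith [h1, mul_le_mul_of_nonneg_left h2 (hK i).le]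
  have hMinv : ∀ i (x : EuclideanSpace ℝ (Fin d)),
      Mreg (hessI (f i) w) φ (Ring.inverse (Mreg (hessI (f i) w) φ) x) = x :=
    fun i x => Mreg_inv_right _ (Asym i) hφ x
  have hNpsd : ∀ i (x : EuclideanSpace ℝ (Fin d)),
      0 ≤ ⟪Ring.inverse (Mreg (hessI (f i) w) φ) x, x⟫ :=
    fun i => inner_Minv_self_nonneg _ (Asym i) hφ
  -- facts about y i := N i (A i g)
  have hyfacts : ∀ i,
      ⟪Ring.inverse (Mreg (hessI (f i) w) φ) (hessI (f i) w g), hessI (f i) w g⟫ ≤ ‖g‖ ^ 2 ∧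
      ‖Ring.inverse (Mreg (hessI (f i) w) φ) (hessI (f i) w g)‖ ≤ ‖g‖ / φ := by
    intro i
    set t := Ring.inverse (Mreg (hessI (f i) w) φ) (hessI (f i) w g) with ht
    have hMt : Mreg (hessI (f i) w) φ t = hessI (f i) w g := hMinv i _
    have e1 : ⟪t, hessI (f i) w g⟫ = ‖hessI (f i) w t‖ ^ 2 + φ ^ 2 * ‖t‖ ^ 2 := by
      conv_lhs => rw [← hMt]
      rw [real_inner_comm]
      exact inner_Mreg_self _ (Asym i) φ t
    have e2 : ⟪t, hessI (f i) w g⟫ ≤ ‖hessI (f i) w t‖ * ‖g‖ := by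
      have h := real_inner_le_norm (hessI (f i) w t) g
      have e : ⟪t, hessI (f i) w g⟫ = ⟪hessI (f i) w t, g⟫ := (Asym i t g).symm
      rw [e]; exact h
    have key : ‖hessI (f i) w t‖ ^ 2 + φ ^ 2 * ‖t‖ ^ 2 ≤ ‖hessI (f i) w t‖ * ‖g‖ := by
      rw [← e1]; exact e2
    have hc0 : 0 ≤ φ ^ 2 * ‖t‖ ^ 2 := by positivity
    constructor
    · have e3 : ⟪t, hessI (f i) w g⟫ = ⟪Ring.inverse (Mreg (hessI (f i) w) φ) (hessI (f i) w g), hessI (f i) w g⟫ := by rw [← ht]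
      rw [← e3, e1]
      exact bound_sq key hc0
    · rw [le_div_iff₀ hφ]
      apply sq_le_imp (by positivity) (norm_nonneg g)
      have : (‖t‖ * φ) ^ 2 = φ ^ 2 * ‖t‖ ^ 2 := by ring
      rw [this]
      exact bound_sq2 key
  -- facts about z i := N i (H g)
  have hzfacts : ∀ i,
      (0 < ⟪Ring.inverse (Mreg (hessI (f i) w) φ) (H g), H g⟫) ∧
      (φ ^ 2 * ‖Ring.inverse (Mreg (hessI (f i) w) φ) (H g)‖ ^ 2
        ≤ ⟪Ring.inverse (Mreg (hessI (f i) w) φ) (H g), H g⟫) ∧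
      (‖H g‖ ^ 2 ≤ (K i ^ 2 + φ ^ 2) * ⟪Ring.inverse (Mreg (hessI (f i) w) φ) (H g), H g⟫) := by
    intro i
    set z := Ring.inverse (Mreg (hessI (f i) w) φ) (H g) with hz
    have hMz : Mreg (hessI (f i) w) φ z = H g := hMinv i _
    have d1 : ⟪z, H g⟫ = ‖hessI (f i) w z‖ ^ 2 + φ ^ 2 * ‖z‖ ^ 2 := by
      conv_lhs => rw [← hMz]
      rw [real_inner_comm]
      exact inner_Mreg_self _ (Asym i) φ z
    have d2 : φ ^ 2 * ‖z‖ ^ 2 ≤ ⟪z, H g⟫ := by rw [d1]; nlinarith [sq_nonneg ‖hessI (f i) w z‖]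
    have hs2nn : 0 ≤ ⟪z, H g⟫ := by rw [d1]; positivity
    have d3 : ‖H g‖ ^ 2 ≤ (K i ^ 2 + φ ^ 2) * ⟪z, H g⟫ := by
      have hMpsd : ∀ x : EuclideanSpace ℝ (Fin d), 0 ≤ ⟪Mreg (hessI (f i) w) φ x, x⟫ := by
        intro x; rw [inner_Mreg_self _ (Asym i)]; positivity
      have hcs := cs_psd (Mreg (hessI (f i) w) φ) (Mreg_selfadj _ (Asym i)) hMpsd z (H g)
      rw [hMz] at hcs
      have hself : ⟪(H g : EuclideanSpace ℝ (Fin d)), H g⟫ = ‖H g‖ ^ 2 :=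
        real_inner_self_eq_norm_sq _
      have hcomm : ⟪(H g : EuclideanSpace ℝ (Fin d)), z⟫ = ⟪z, H g⟫ := real_inner_comm _ _
      rw [hself, hcomm] at hcs
      have hMb : ⟪Mreg (hessI (f i) w) φ (H g), H g⟫ ≤ (K i ^ 2 + φ ^ 2) * ‖H g‖ ^ 2 := by
        calc ⟪Mreg (hessI (f i) w) φ (H g), H g⟫
            ≤ ‖Mreg (hessI (f i) w) φ (H g)‖ * ‖H g‖ := real_inner_le_norm _ _
          _ ≤ ((K i ^ 2 + φ ^ 2) * ‖H g‖) * ‖H g‖ :=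
              mul_le_mul_of_nonneg_right (hMapp i (H g)) (norm_nonneg _)
          _ = (K i ^ 2 + φ ^ 2) * ‖H g‖ ^ 2 := by ring
      have hcs2 : (‖H g‖ ^ 2) ^ 2 ≤ ⟪z, H g⟫ * ((K i ^ 2 + φ ^ 2) * ‖H g‖ ^ 2) :=
        le_trans hcs (mul_le_mul_of_nonneg_left hMb hs2nn)
      nlinarith [hcs2, mul_pos hHgpos hHgpos]
    refine ⟨?_, d2, d3⟩
    have hKφ : 0 < K i ^ 2 + φ ^ 2 := by positivity
    nlinarith [d3, mul_pos hHgpos hHgpos, hs2nn]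
  -- Cauchy-Schwarz relation between y and z
  have hcsyz : ∀ i,
      ⟪Ring.inverse (Mreg (hessI (f i) w) φ) (hessI (f i) w g), H g⟫ ^ 2
        ≤ ‖g‖ ^ 2 * ⟪Ring.inverse (Mreg (hessI (f i) w) φ) (H g), H g⟫ := by
    intro i
    have hcs := cs_psd (Ring.inverse (Mreg (hessI (f i) w) φ))
      (Minv_selfadj _ (Asym i) hφ) (hNpsd i) (hessI (f i) w g) (H g)
    have h1 := (hyfacts i).1
    have h2 := (hzfacts i).1
    nlinarith [hcs, h1, h2.le]
  -- Part 1 : positivity of the multipliers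
  have part1 : ∀ i, ⟪Ring.inverse (Mreg (hessI (f i) w) φ) (hessI (f i) w g), H g⟫
      < θ * ‖g‖ ^ 2 → 0 < lam i := by
    intro i hcase
    rw [hlam i]
    exact div_pos (by linarith) (hzfacts i).1
  -- inner products of the directions with H g
  have hpinner : ∀ i, ⟪p i, H g⟫ ≤ -(θ * ‖g‖ ^ 2) := by
    intro i
    by_cases hcase : ⟪Ring.inverse (Mreg (hessI (f i) w) φ) (hessI (f i) w g), H g⟫
        < θ * ‖g‖ ^ 2
    · rw [hpin i hcase]
      rw [inner_sub_left, inner_neg_left, real_inner_smul_left]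
      have hs2 := (hzfacts i).1
      have heq : lam i * ⟪Ring.inverse (Mreg (hessI (f i) w) φ) (H g), H g⟫
          = θ * ‖g‖ ^ 2 - ⟪Ring.inverse (Mreg (hessI (f i) w) φ) (hessI (f i) w g), H g⟫ := by
        rw [hlam i]
        exact div_mul_cancel₀ _ (ne_of_gt hs2)
      linarith [heq]
    · push_neg at hcase
      rw [hpout i hcase, inner_neg_left]
      linarith
  have hpbarHg : ⟪pbar, H g⟫ ≤ -θ * ‖g‖ ^ 2 := by
    rw [hpbar, real_inner_smul_left, sum_inner]
    have hsum : ∑ i, ⟪p i, H g⟫ ≤ ∑ _i : Fin m, (-(θ * ‖g‖ ^ 2)) :=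
      Finset.sum_le_sum fun i _ => hpinner i
    rw [Finset.sum_const, Finset.card_univ, Fintype.card_fin, nsmul_eq_mul] at hsum
    have h2 : (1 / (m:ℝ)) * ∑ i, ⟪p i, H g⟫ ≤ (1 / (m:ℝ)) * ((m:ℝ) * (-(θ * ‖g‖ ^ 2))) :=
      mul_le_mul_of_nonneg_left hsum (by positivity)
    have h3 : (1 / (m:ℝ)) * ((m:ℝ) * (-(θ * ‖g‖ ^ 2))) = -θ * ‖g‖ ^ 2 := by
      field_simp
    linarith [h2, h3.symm.le, h3.le]
  -- norm bounds on the directions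
  have hsqrt_eq : ∀ i, Real.sqrt ((K i ^ 2 + φ ^ 2) / φ ^ 2)
      = Real.sqrt (K i ^ 2 + φ ^ 2) / φ := by
    intro i
    rw [Real.sqrt_div (by positivity), Real.sqrt_sq hφ.le]
  have hrge : ∀ i, φ ≤ Real.sqrt (K i ^ 2 + φ ^ 2) := by
    intro i
    have h := Real.sqrt_le_sqrt (show φ ^ 2 ≤ K i ^ 2 + φ ^ 2 by nlinarith [sq_nonneg (K i)])
    rwa [Real.sqrt_sq hφ.le] at h
  have hrpos : ∀ i, 0 < Real.sqrt (K i ^ 2 + φ ^ 2) := fun i => lt_of_lt_of_le hφ (hrge i)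
  have hsigma : ∀ i, γ * Real.sqrt ν * ‖g‖
      ≤ Real.sqrt (K i ^ 2 + φ ^ 2)
        * Real.sqrt ⟪Ring.inverse (Mreg (hessI (f i) w) φ) (H g), H g⟫ := by
    intro i
    have hs2 := (hzfacts i).1
    have d3 := (hzfacts i).2.2
    apply sq_le_imp (by positivity) (by positivity)
    have e : (Real.sqrt (K i ^ 2 + φ ^ 2)
          * Real.sqrt ⟪Ring.inverse (Mreg (hessI (f i) w) φ) (H g), H g⟫) ^ 2
        = (K i ^ 2 + φ ^ 2) * ⟪Ring.inverse (Mreg (hessI (f i) w) φ) (H g), H g⟫ := by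
      rw [mul_pow, Real.sq_sqrt (by positivity : (0:ℝ) ≤ K i ^ 2 + φ ^ 2),
        Real.sq_sqrt hs2.le]
    rw [e]
    calc (γ * Real.sqrt ν * ‖g‖) ^ 2 ≤ ‖H g‖ ^ 2 := by
          apply pow_le_pow_left₀ (by positivity) hHg
      _ ≤ (K i ^ 2 + φ ^ 2) * ⟪Ring.inverse (Mreg (hessI (f i) w) φ) (H g), H g⟫ := d3
  have hlamz : ∀ i, ⟪Ring.inverse (Mreg (hessI (f i) w) φ) (hessI (f i) w g), H g⟫
      < θ * ‖g‖ ^ 2 →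
      lam i * ‖Ring.inverse (Mreg (hessI (f i) w) φ) (H g)‖
        ≤ ((1 / φ + θ / (γ * Real.sqrt ν)) * Real.sqrt ((K i ^ 2 + φ ^ 2) / φ ^ 2)) * ‖g‖ := by
    intro i hcase
    set a := γ * Real.sqrt ν with hadef
    set s2 := ⟪Ring.inverse (Mreg (hessI (f i) w) φ) (H g), H g⟫ with hs2def
    set q := ⟪Ring.inverse (Mreg (hessI (f i) w) φ) (hessI (f i) w g), H g⟫ with hqdef
    set r := Real.sqrt (K i ^ 2 + φ ^ 2) with hrdef
    set σ := Real.sqrt s2 with hσdef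
    have hs2pos : 0 < s2 := (hzfacts i).1
    have hσpos : 0 < σ := Real.sqrt_pos.mpr hs2pos
    have hσsq : σ ^ 2 = s2 := Real.sq_sqrt hs2pos.le
    have hznorm : φ * ‖Ring.inverse (Mreg (hessI (f i) w) φ) (H g)‖ ≤ σ := by
      apply sq_le_imp (by positivity) hσpos.le
      rw [hσsq]
      have := (hzfacts i).2.1
      nlinarith [this]
    have hq : -(‖g‖ * σ) ≤ q := by
      have habs : |q| ≤ ‖g‖ * σ := by
        apply sq_le_imp (abs_nonneg q) (by positivity)
        rw [sq_abs, mul_pow, hσsq]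
        exact hcsyz i
      linarith [neg_abs_le q, (abs_le.mp habs).2]
    have hlami : lam i = (θ * ‖g‖ ^ 2 - q) / s2 := hlam i
    have hlampos : 0 < lam i := part1 i hcase
    have hzb : ‖Ring.inverse (Mreg (hessI (f i) w) φ) (H g)‖ ≤ σ / φ := by
      rw [le_div_iff₀ hφ]; linarith [hznorm]
    have step1 : lam i * ‖Ring.inverse (Mreg (hessI (f i) w) φ) (H g)‖
        ≤ lam i * (σ / φ) := mul_le_mul_of_nonneg_left hzb hlampos.le
    have step2 : lam i * (σ / φ) = (θ * ‖g‖ ^ 2 - q) / (σ * φ) * (σ * σ) / s2 := by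
      rw [hlami]; field_simp
    have step2' : lam i * (σ / φ) = (θ * ‖g‖ ^ 2 - q) / (σ * φ) := by
      rw [step2, ← hσsq]; field_simp
    have step3 : (θ * ‖g‖ ^ 2 - q) / (σ * φ) ≤ (θ * ‖g‖ ^ 2 + ‖g‖ * σ) / (σ * φ) := by
      apply div_le_div_of_nonneg_right ?_ (by positivity)
      linarith [hq]
    have hsig := hsigma i
    have step4 : (θ * ‖g‖ ^ 2 + ‖g‖ * σ) / (σ * φ)
        ≤ ((1 / φ + θ / a) * (r / φ)) * ‖g‖ := by
      rw [div_le_iff₀ (by positivity)]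
      have key : a * ‖g‖ ≤ r * σ := hsig
      have hane : a ≠ 0 := ne_of_gt hapos
      have expand : ((1 / φ + θ / a) * (r / φ)) * ‖g‖ * (σ * φ)
          = (r * σ * ‖g‖) / φ + (θ * r * ‖g‖ * σ) / a := by
        field_simp
      rw [expand]
      have h1 : θ * ‖g‖ ^ 2 ≤ (θ * r * ‖g‖ * σ) / a := by
        rw [le_div_iff₀ hapos]
        calc θ * ‖g‖ ^ 2 * a = (θ * ‖g‖) * (a * ‖g‖) := by ring
          _ ≤ (θ * ‖g‖) * (r * σ) := mul_le_mul_of_nonneg_left key (by positivity)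
          _ = θ * r * ‖g‖ * σ := by ring
      have h2 : ‖g‖ * σ ≤ (r * σ * ‖g‖) / φ := by
        rw [le_div_iff₀ hφ]
        have := mul_le_mul_of_nonneg_left (hrge i)
          (mul_nonneg (norm_nonneg g) hσpos.le)
        nlinarith [this]
      linarith [h1, h2]
    rw [hsqrt_eq i]
    calc lam i * ‖Ring.inverse (Mreg (hessI (f i) w) φ) (H g)‖
        ≤ lam i * (σ / φ) := step1
      _ = (θ * ‖g‖ ^ 2 - q) / (σ * φ) := step2'
      _ ≤ (θ * ‖g‖ ^ 2 + ‖g‖ * σ) / (σ * φ) := step3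
      _ ≤ ((1 / φ + θ / a) * (r / φ)) * ‖g‖ := step4
  have hpbound : ∀ i, ‖p i‖ ≤ ‖g‖ / φ
      + ((1 / φ + θ / (γ * Real.sqrt ν)) * Real.sqrt ((K i ^ 2 + φ ^ 2) / φ ^ 2)) * ‖g‖ := by
    intro i
    have ht2 : 0 ≤ ((1 / φ + θ / (γ * Real.sqrt ν)) * Real.sqrt ((K i ^ 2 + φ ^ 2) / φ ^ 2)) * ‖g‖ := by
      positivity
    by_cases hcase : ⟪Ring.inverse (Mreg (hessI (f i) w) φ) (hessI (f i) w g), H g⟫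
        < θ * ‖g‖ ^ 2
    · rw [hpin i hcase]
      have hlampos := part1 i hcase
      calc ‖-(Ring.inverse (Mreg (hessI (f i) w) φ) (hessI (f i) w g))
            - lam i • Ring.inverse (Mreg (hessI (f i) w) φ) (H g)‖
          ≤ ‖-(Ring.inverse (Mreg (hessI (f i) w) φ) (hessI (f i) w g))‖
            + ‖lam i • Ring.inverse (Mreg (hessI (f i) w) φ) (H g)‖ := norm_sub_le _ _
        _ = ‖Ring.inverse (Mreg (hessI (f i) w) φ) (hessI (f i) w g)‖
            + lam i * ‖Ring.inverse (Mreg (hessI (f i) w) φ) (H g)‖ := by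
            rw [norm_neg, norm_smul, Real.norm_eq_abs, abs_of_pos hlampos]
        _ ≤ ‖g‖ / φ + ((1 / φ + θ / (γ * Real.sqrt ν))
              * Real.sqrt ((K i ^ 2 + φ ^ 2) / φ ^ 2)) * ‖g‖ := by
            have h1 := (hyfacts i).2
            have h2 := hlamz i hcase
            linarith
    · push_neg at hcase
      rw [hpout i hcase, norm_neg]
      have h1 := (hyfacts i).2
      linarith
  have hpbarnorm : ‖pbar‖ ≤ c * ‖g‖ := by
    rw [hpbar, norm_smul, Real.norm_eq_abs, abs_of_nonneg (by positivity)]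
    have h1 : ‖∑ i, p i‖ ≤ ∑ i, ‖p i‖ := norm_sum_le _ _
    have h2 : ∑ i, ‖p i‖ ≤ ∑ i, (‖g‖ / φ
        + ((1 / φ + θ / (γ * Real.sqrt ν)) * Real.sqrt ((K i ^ 2 + φ ^ 2) / φ ^ 2)) * ‖g‖) :=
      Finset.sum_le_sum fun i _ => hpbound i
    have h3 : ∑ i : Fin m, (‖g‖ / φ
        + ((1 / φ + θ / (γ * Real.sqrt ν)) * Real.sqrt ((K i ^ 2 + φ ^ 2) / φ ^ 2)) * ‖g‖)
        = (m:ℝ) * (‖g‖ / φ) + (1 / φ + θ / (γ * Real.sqrt ν))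
            * (∑ i, Real.sqrt ((K i ^ 2 + φ ^ 2) / φ ^ 2)) * ‖g‖ := by
      rw [Finset.sum_add_distrib, Finset.sum_const, Finset.card_univ, Fintype.card_fin,
        nsmul_eq_mul]
      congr 1
      rw [← Finset.sum_mul, ← Finset.mul_sum]
    have h4 : (1 / (m:ℝ)) * ‖∑ i, p i‖ ≤ (1 / (m:ℝ)) * ((m:ℝ) * (‖g‖ / φ)
        + (1 / φ + θ / (γ * Real.sqrt ν))
            * (∑ i, Real.sqrt ((K i ^ 2 + φ ^ 2) / φ ^ 2)) * ‖g‖) := by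
      apply mul_le_mul_of_nonneg_left _ (by positivity)
      rw [← h3]; linarith
    calc (1 / (m:ℝ)) * ‖∑ i, p i‖ ≤ _ := h4
      _ = c * ‖g‖ := by rw [hc]; field_simp
  -- global Lipschitz facts
  set Kb := (1 / (m:ℝ)) * ∑ i, K i with hKb
  set Lb := (1 / (m:ℝ)) * ∑ i, L i with hLb
  have hKbpos : 0 < Kb := by
    rw [hKb]
    have : (0:ℝ) < ∑ i, K i :=
      Finset.sum_pos (fun i _ => hK i) (Finset.univ_nonempty_iff.mpr ⟨⟨0, hm⟩⟩)
    positivity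
  have hLbpos : 0 < Lb := by
    rw [hLb]
    have : (0:ℝ) < ∑ i, L i :=
      Finset.sum_pos (fun i _ => hL i) (Finset.univ_nonempty_iff.mpr ⟨⟨0, hm⟩⟩)
    positivity
  have hgradlip : ∀ x y : EuclideanSpace ℝ (Fin d),
      ‖gradF f x - gradF f y‖ ≤ Kb * ‖x - y‖ := by
    intro x y
    show ‖gradient (avgFun f) x - gradient (avgFun f) y‖ ≤ Kb * ‖x - y‖
    rw [grad_avg f hf x, grad_avg f hf y, ← smul_sub, ← Finset.sum_sub_distrib, norm_smul,
      Real.norm_eq_abs, abs_of_nonneg (by positivity)]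
    calc (1 / (m:ℝ)) * ‖∑ i, (gradient (f i) x - gradient (f i) y)‖
        ≤ (1 / (m:ℝ)) * ∑ i, ‖gradient (f i) x - gradient (f i) y‖ :=
          mul_le_mul_of_nonneg_left (norm_sum_le _ _) (by positivity)
      _ ≤ (1 / (m:ℝ)) * ∑ i, K i * ‖x - y‖ :=
          mul_le_mul_of_nonneg_left (Finset.sum_le_sum fun i _ => hgrad i x y) (by positivity)
      _ = Kb * ‖x - y‖ := by rw [hKb, ← Finset.sum_mul]; ring
  have hhesslip : ∀ x y : EuclideanSpace ℝ (Fin d),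
      ‖hessF f x - hessF f y‖ ≤ Lb * ‖x - y‖ := by
    intro x y
    have e : hessF f x - hessF f y = (1 / (m:ℝ)) • ∑ i, (hessI (f i) x - hessI (f i) y) := by
      rw [hess_avg f hf x, hess_avg f hf y, Finset.sum_sub_distrib]
      exact (smul_sub _ _ _).symm
    have e2 : ‖(1 / (m:ℝ)) • ∑ i, (hessI (f i) x - hessI (f i) y)‖
        = (1 / (m:ℝ)) * ‖∑ i, (hessI (f i) x - hessI (f i) y)‖ := by
      have h := norm_smul ((1:ℝ) / m) (∑ i, (hessI (f i) x - hessI (f i) y))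
      rw [Real.norm_eq_abs, abs_of_nonneg (by positivity)] at h
      exact h
    rw [e, e2]
    calc (1 / (m:ℝ)) * ‖∑ i, (hessI (f i) x - hessI (f i) y)‖
        ≤ (1 / (m:ℝ)) * ∑ i, ‖hessI (f i) x - hessI (f i) y‖ :=
          mul_le_mul_of_nonneg_left (norm_sum_le _ _) (by positivity)
      _ ≤ (1 / (m:ℝ)) * ∑ i, L i * ‖x - y‖ :=
          mul_le_mul_of_nonneg_left (Finset.sum_le_sum fun i _ => hhess i x y) (by positivity)
      _ = Lb * ‖x - y‖ := by rw [hLb, ← Finset.sum_mul]; ring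
  have htaylor : ∀ s : EuclideanSpace ℝ (Fin d),
      ‖gradF f (w + s) - g - H s‖ ≤ Lb / 2 * ‖s‖ ^ 2 := by
    intro s
    exact taylor_bound (F := gradient (avgFun f)) (DF := hessF f)
      (fun x => hasFDerivAt_gradient' havg x) hhesslip w s
  have hLconst : Lconst K L G = Kb ^ 2 + Lb * G := rfl
  have hLpos : 0 < Lconst K L G := by
    rw [hLconst]; positivity
  have hcpos : 0 < c := by
    rw [hc]
    have h1 : (0:ℝ) ≤ (1 / (m:ℝ)) * (1 / φ + θ / (γ * Real.sqrt ν))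
        * ∑ i, Real.sqrt ((K i ^ 2 + φ ^ 2) / φ ^ 2) := by positivity
    have h2 : (0:ℝ) < 1 / φ := by positivity
    linarith
  have hτpos : 0 < τ := by
    rw [hτ]
    apply div_pos (by nlinarith) (by positivity)
  -- main descent estimate
  have main : ∀ α : ℝ, 0 < α → α ≤ τ →
      ‖gradF f (w + α • pbar)‖ ^ 2 ≤ ‖g‖ ^ 2 + 2 * α * ρ * ⟪pbar, H g⟫ ∧
      ‖g‖ ^ 2 + 2 * α * ρ * ⟪pbar, H g⟫ ≤ (1 - 2 * α * ρ * θ) * ‖g‖ ^ 2 := by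
    intro α hα hατ
    have goal2 : ‖g‖ ^ 2 + 2 * α * ρ * ⟪pbar, H g⟫ ≤ (1 - 2 * α * ρ * θ) * ‖g‖ ^ 2 := by
      have h := mul_le_mul_of_nonneg_left hpbarHg
        (show (0:ℝ) ≤ 2 * α * ρ by positivity)
      linarith [h]
    refine ⟨?_, goal2⟩
    set s : EuclideanSpace ℝ (Fin d) := α • pbar with hsdef
    set u : EuclideanSpace ℝ (Fin d) := gradF f (w + s) with hudef
    set r : EuclideanSpace ℝ (Fin d) := u - g - H s with hrdef
    have hr : ‖r‖ ≤ Lb / 2 * ‖s‖ ^ 2 := htaylor s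
    have hexp : ‖u‖ ^ 2 = ‖g‖ ^ 2 + 2 * ⟪g, u - g⟫ + ‖u - g‖ ^ 2 := by
      have h := norm_add_sq_real g (u - g)
      have e : g + (u - g) = u := by abel
      rw [e] at h
      linarith [h]
    have hug : u - g = H s + r := by rw [hrdef]; abel
    have hinner : ⟪g, u - g⟫ = α * ⟪pbar, H g⟫ + ⟪g, r⟫ := by
      rw [hug, inner_add_right]
      congr 1
      rw [hsdef, map_smul, real_inner_smul_right]
      congr 1
      rw [← Hsym g pbar, real_inner_comm]
    have hgr : ⟪g, r⟫ ≤ G * (Lb / 2 * ‖s‖ ^ 2) := by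
      calc ⟪g, r⟫ ≤ ‖g‖ * ‖r‖ := real_inner_le_norm _ _
        _ ≤ G * (Lb / 2 * ‖s‖ ^ 2) := by
            apply mul_le_mul hG hr (norm_nonneg r) hGpos.le
    have hugn : ‖u - g‖ ≤ Kb * ‖s‖ := by
      have h := hgradlip (w + s) w
      rw [show w + s - w = s by abel] at h
      exact h
    have hugn2 : ‖u - g‖ ^ 2 ≤ Kb ^ 2 * ‖s‖ ^ 2 := by
      have := pow_le_pow_left₀ (norm_nonneg _) hugn 2
      nlinarith [this]
    have hsnorm : ‖s‖ ^ 2 = α ^ 2 * ‖pbar‖ ^ 2 := by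
      rw [hsdef, norm_smul, Real.norm_eq_abs, abs_of_pos hα]; ring
    have hpb2 : ‖pbar‖ ^ 2 ≤ c ^ 2 * ‖g‖ ^ 2 := by
      have := pow_le_pow_left₀ (norm_nonneg _) hpbarnorm 2
      nlinarith [this]
    have hτmul : τ * (Lconst K L G * c ^ 2) = 2 * (1 - ρ) * θ := by
      rw [hτ]
      field_simp
    have hαmul : α * (Lconst K L G * c ^ 2) ≤ 2 * (1 - ρ) * θ := by
      rw [← hτmul]
      exact mul_le_mul_of_nonneg_right hατ (by positivity)
    have hP : ⟪pbar, H g⟫ ≤ -θ * ‖g‖ ^ 2 := hpbarHg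
    -- combine
    have hquad : Lconst K L G * (α ^ 2 * ‖pbar‖ ^ 2) ≤ 2 * (1 - ρ) * θ * (α * ‖g‖ ^ 2) := by
      have e1 : α ^ 2 * ‖pbar‖ ^ 2 ≤ α ^ 2 * (c ^ 2 * ‖g‖ ^ 2) :=
        mul_le_mul_of_nonneg_left hpb2 (sq_nonneg α)
      have e2 : Lconst K L G * (α ^ 2 * (c ^ 2 * ‖g‖ ^ 2))
          = (α * (Lconst K L G * c ^ 2)) * (α * ‖g‖ ^ 2) := by ring
      have e3 : (α * (Lconst K L G * c ^ 2)) * (α * ‖g‖ ^ 2)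
          ≤ (2 * (1 - ρ) * θ) * (α * ‖g‖ ^ 2) :=
        mul_le_mul_of_nonneg_right hαmul (by positivity)
      calc Lconst K L G * (α ^ 2 * ‖pbar‖ ^ 2)
          ≤ Lconst K L G * (α ^ 2 * (c ^ 2 * ‖g‖ ^ 2)) :=
            mul_le_mul_of_nonneg_left e1 hLpos.le
        _ = (α * (Lconst K L G * c ^ 2)) * (α * ‖g‖ ^ 2) := e2
        _ ≤ 2 * (1 - ρ) * θ * (α * ‖g‖ ^ 2) := e3
    have hρP : 2 * α * (1 - ρ) * ⟪pbar, H g⟫ ≤ 2 * α * (1 - ρ) * (-θ * ‖g‖ ^ 2) := by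
      apply mul_le_mul_of_nonneg_left hP
      have h1ρ : (0:ℝ) ≤ 1 - ρ := by linarith
      exact mul_nonneg (mul_nonneg (by norm_num) hα.le) h1ρ
    rw [hsnorm] at hgr hugn2
    rw [hLconst] at hquad
    linarith [hexp, hinner, hgr, hugn2, hquad, hρP]
  refine ⟨part1, hpbarHg, fun α hα hατ => main α hα hατ, ?_, ?_, ?_⟩
  · have h := main τ hτpos le_rfl
    exact le_trans h.1 h.2
  · have h := main τ hτpos le_rfl
    have h2 : ‖gradF f (w + τ • pbar)‖ ^ 2 ≤ (1 - 2 * τ * ρ * θ) * ‖g‖ ^ 2 :=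
      le_trans h.1 h.2
    have h3 : (0:ℝ) ≤ ‖gradF f (w + τ • pbar)‖ ^ 2 := sq_nonneg _
    by_contra hcon
    push_neg at hcon
    nlinarith [h2, h3, mul_pos hgpos hgpos]
  · nlinarith [mul_pos (mul_pos hτpos hρ0) hθ]
end

section
/- Let H and H_i be symmetric d×d real matrices, φ, θ > 0, and g ∈ ℝ^d with g ≠ 0. If ⟨(H_i² + φ²I)⁻¹H_i g, Hg⟩ ≥ θ‖g‖², then θφ ≤ ‖Hg‖/‖g‖. -/
open scoped RealInnerProductSpace

/-- **Lemma 3 of the paper.** If `g ≠ 0` and `⟪(Hᵢ² + φ²I)⁻¹Hᵢg, Hg⟫ ≥ θ‖g‖²`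
(i.e. index `i` is not in the Case 3 set), then `θφ ≤ ‖Hg‖/‖g‖`. -/
theorem stmt_16 {d : ℕ}
    (H Hi : EuclideanSpace ℝ (Fin d) →L[ℝ] EuclideanSpace ℝ (Fin d))
    (hH : IsSelfAdjoint H) (hHi : IsSelfAdjoint Hi)
    (φ θ : ℝ) (hφ : 0 < φ) (hθ : 0 < θ)
    (g : EuclideanSpace ℝ (Fin d)) (hg : g ≠ 0)
    (h : θ * ‖g‖ ^ 2 ≤ ⟪Ring.inverse (Hi * Hi + φ ^ 2 • 1) (Hi g), H g⟫) :
    θ * φ ≤ ‖H g‖ / ‖g‖ := by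
  have hgpos : (0:ℝ) < ‖g‖ := norm_pos_iff.mpr hg
  set T : EuclideanSpace ℝ (Fin d) →L[ℝ] EuclideanSpace ℝ (Fin d) :=
    Hi * Hi + φ ^ 2 • 1 with hT
  by_cases hu : IsUnit T
  · set y := Ring.inverse T (Hi g) with hy
    have hTy : T y = Hi g := by
      rw [hy, ← ContinuousLinearMap.mul_apply, Ring.mul_inverse_cancel _ hu,
        ContinuousLinearMap.one_apply]
    have hsym : ∀ x z, ⟪Hi x, z⟫ = ⟪x, Hi z⟫ := fun x z => hHi.isSymmetric x z
    have hkey : ‖Hi y‖ ^ 2 + φ ^ 2 * ‖y‖ ^ 2 = ⟪g, Hi y⟫ := by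
      have h1 : ⟪T y, y⟫ = ‖Hi y‖ ^ 2 + φ ^ 2 * ‖y‖ ^ 2 := by
        simp only [hT, ContinuousLinearMap.add_apply, ContinuousLinearMap.mul_apply,
          ContinuousLinearMap.smul_apply, ContinuousLinearMap.one_apply]
        rw [inner_add_left, real_inner_smul_left, real_inner_self_eq_norm_sq,
          hsym (Hi y) y, real_inner_self_eq_norm_sq]
      have h2 : ⟪T y, y⟫ = ⟪g, Hi y⟫ := by
        rw [hTy, ← hsym g y]
      linarith [h1, h2]
    have hineq1 : ⟪g, Hi y⟫ ≤ ‖g‖ * ‖Hi y‖ := real_inner_le_norm g (Hi y)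
    have hynorm : φ * ‖y‖ ≤ ‖g‖ := by
      nlinarith [norm_nonneg (Hi y), norm_nonneg y, norm_nonneg g,
        sq_nonneg (‖Hi y‖ - ‖g‖), sq_nonneg (φ * ‖y‖)]
    have hineq2 : θ * ‖g‖ ^ 2 ≤ ‖y‖ * ‖H g‖ := le_trans h (real_inner_le_norm y (H g))
    rw [le_div_iff₀ hgpos]
    nlinarith [norm_nonneg (H g), norm_nonneg y]
  · rw [Ring.inverse_non_unit _ hu] at h
    simp only [ContinuousLinearMap.zero_apply, inner_zero_left] at h
    nlinarith [mul_pos hθ (pow_pos hgpos 2)]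
end

section
/- Let H be a d×d real matrix, g, u ∈ ℝ^d with u ≠ 0, and φ, θ > 0. Set M = HᵀH + φ²I (which is invertible) and suppose θ‖g‖² − ⟨M⁻¹Hᵀg, u⟩ > 0. Define λ = (θ‖g‖² − ⟨M⁻¹Hᵀg, u⟩)/⟨M⁻¹u, u⟩ and p* = −M⁻¹Hᵀg − λM⁻¹u. Then λ > 0, ⟨p*, u⟩ = −θ‖g‖², and p* is the unique solution of the constrained least-squares problem: for every q ∈ ℝ^d with ⟨q, u⟩ ≤ −θ‖g‖², (1/2)‖Hp* + g‖² + (φ²/2)‖p*‖² ≤ (1/2)‖Hq + g‖² + (φ²/2)‖q‖², with equality only when q = p*. -/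
open scoped RealInnerProductSpace

/-- **Exact solution of the Case 3 sub-problem (6)/(11) of the paper.** With
`M = HᵀH + φ²I` (invertible), `λ = (θ‖g‖² − ⟨M⁻¹Hᵀg, u⟩)/⟨M⁻¹u, u⟩` and
`p* = −M⁻¹Hᵀg − λM⁻¹u`, one has `λ > 0`, `⟨p*, u⟩ = −θ‖g‖²`, and `p*` is the unique
minimizer of `(1/2)‖Hp + g‖² + (φ²/2)‖p‖²` subject to `⟨p, u⟩ ≤ −θ‖g‖²`. -/
theorem stmt_18 {d : ℕ}
    (H : EuclideanSpace ℝ (Fin d) →L[ℝ] EuclideanSpace ℝ (Fin d))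
    (g u : EuclideanSpace ℝ (Fin d)) (hu : u ≠ 0)
    (φ θ : ℝ) (hφ : 0 < φ) (hθ : 0 < θ)
    (M : EuclideanSpace ℝ (Fin d) →L[ℝ] EuclideanSpace ℝ (Fin d))
    (hM : M = ContinuousLinearMap.adjoint H * H + φ ^ 2 • 1)
    (hpos : 0 < θ * ‖g‖ ^ 2 - ⟪Ring.inverse M (ContinuousLinearMap.adjoint H g), u⟫)
    (lam : ℝ)
    (hlam : lam = (θ * ‖g‖ ^ 2 - ⟪Ring.inverse M (ContinuousLinearMap.adjoint H g), u⟫)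
      / ⟪Ring.inverse M u, u⟫)
    (pstar : EuclideanSpace ℝ (Fin d))
    (hpstar : pstar = -(Ring.inverse M (ContinuousLinearMap.adjoint H g))
      - lam • Ring.inverse M u) :
    IsUnit M ∧ 0 < lam ∧ ⟪pstar, u⟫ = -θ * ‖g‖ ^ 2 ∧
    ∀ q : EuclideanSpace ℝ (Fin d), ⟪q, u⟫ ≤ -θ * ‖g‖ ^ 2 →
      ((1 / 2) * ‖H pstar + g‖ ^ 2 + (φ ^ 2 / 2) * ‖pstar‖ ^ 2
          ≤ (1 / 2) * ‖H q + g‖ ^ 2 + (φ ^ 2 / 2) * ‖q‖ ^ 2 ∧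
        ((1 / 2) * ‖H q + g‖ ^ 2 + (φ ^ 2 / 2) * ‖q‖ ^ 2
            = (1 / 2) * ‖H pstar + g‖ ^ 2 + (φ ^ 2 / 2) * ‖pstar‖ ^ 2 → q = pstar)) := by
  set a : EuclideanSpace ℝ (Fin d) := ContinuousLinearMap.adjoint H g with ha
  -- quadratic form of M
  have hQ : ∀ x : EuclideanSpace ℝ (Fin d), ⟪M x, x⟫ = ‖H x‖ ^ 2 + φ ^ 2 * ‖x‖ ^ 2 := by
    intro x
    rw [hM, ContinuousLinearMap.add_apply, inner_add_left, ContinuousLinearMap.smul_apply,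
      ContinuousLinearMap.one_apply, real_inner_smul_left, ContinuousLinearMap.mul_apply,
      ContinuousLinearMap.adjoint_inner_left, real_inner_self_eq_norm_sq,
      real_inner_self_eq_norm_sq]
  have hQpos : ∀ x : EuclideanSpace ℝ (Fin d), x ≠ 0 → 0 < ⟪M x, x⟫ := by
    intro x hx
    rw [hQ]
    have hxn : ‖x‖ ≠ 0 := norm_ne_zero_iff.mpr hx
    have h1 : (0:ℝ) ≤ ‖H x‖ ^ 2 := by positivity
    have h2 : (0:ℝ) < φ ^ 2 * ‖x‖ ^ 2 := by positivity
    linarith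
  have hQzero : ∀ x : EuclideanSpace ℝ (Fin d), ⟪M x, x⟫ = 0 → x = 0 := by
    intro x hx
    by_contra hne
    exact absurd hx (ne_of_gt (hQpos x hne))
  -- injectivity of M
  have hinj : Function.Injective M := by
    rw [injective_iff_map_eq_zero']
    intro x
    constructor
    · intro hx
      apply hQzero
      rw [hx, inner_zero_left]
    · intro hx; rw [hx, map_zero]
  have hbij : Function.Bijective (M : EuclideanSpace ℝ (Fin d) →ₗ[ℝ] EuclideanSpace ℝ (Fin d)) :=
    ⟨hinj, (LinearMap.injective_iff_surjective
      (f := (M : EuclideanSpace ℝ (Fin d) →ₗ[ℝ] EuclideanSpace ℝ (Fin d)))).mp hinj⟩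
  let e : EuclideanSpace ℝ (Fin d) ≃L[ℝ] EuclideanSpace ℝ (Fin d) :=
    (LinearEquiv.ofBijective (M : EuclideanSpace ℝ (Fin d) →ₗ[ℝ] EuclideanSpace ℝ (Fin d))
      hbij).toContinuousLinearEquiv
  have hunit : IsUnit M := by
    refine ⟨⟨M, (e.symm : EuclideanSpace ℝ (Fin d) →L[ℝ] EuclideanSpace ℝ (Fin d)), ?_, ?_⟩, rfl⟩
    · refine ContinuousLinearMap.ext fun x => ?_
      exact e.apply_symm_apply x
    · refine ContinuousLinearMap.ext fun x => ?_
      exact e.symm_apply_apply x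
  set Minv : EuclideanSpace ℝ (Fin d) →L[ℝ] EuclideanSpace ℝ (Fin d) := Ring.inverse M
    with hMinvdef
  have hMinvM : ∀ x : EuclideanSpace ℝ (Fin d), M (Minv x) = x := by
    intro x
    have h : M * Minv = 1 := Ring.mul_inverse_cancel M hunit
    calc M (Minv x) = (M * Minv) x := rfl
    _ = x := by rw [h]; rfl
  -- positivity of ⟪Minv u, u⟫
  have hvu : 0 < ⟪Minv u, u⟫ := by
    have hvne : Minv u ≠ 0 := by
      intro h
      exact hu (by rw [← hMinvM u, h, map_zero])
    have h := hQpos (Minv u) hvne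
    rwa [hMinvM, real_inner_comm] at h
  have hlampos : 0 < lam := by
    rw [hlam]
    exact div_pos hpos hvu
  -- ⟪pstar, u⟫ = -θ‖g‖²
  have hpu : ⟪pstar, u⟫ = -θ * ‖g‖ ^ 2 := by
    rw [hpstar, inner_sub_left, inner_neg_left, real_inner_smul_left]
    have hlu : lam * ⟪Minv u, u⟫ = θ * ‖g‖ ^ 2 - ⟪Minv a, u⟫ := by
      rw [hlam, div_mul_cancel₀ _ (ne_of_gt hvu)]
    rw [hlu]
    ring
  refine ⟨hunit, hlampos, hpu, ?_⟩
  -- key identity: M pstar = -a - lam • u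
  have hMp : M pstar = -a - lam • u := by
    rw [hpstar, map_sub, map_neg, map_smul, hMinvM, hMinvM]
  intro q hq
  set δ : EuclideanSpace ℝ (Fin d) := q - pstar with hδ
  have hqe : q = pstar + δ := by simp [hδ]
  -- expansion of the objective
  have hexp : (1 / 2) * ‖H q + g‖ ^ 2 + (φ ^ 2 / 2) * ‖q‖ ^ 2
      = (1 / 2) * ‖H pstar + g‖ ^ 2 + (φ ^ 2 / 2) * ‖pstar‖ ^ 2
        + ((1 / 2) * ⟪M δ, δ⟫ + ⟪M pstar + a, δ⟫) := by
    have h1 : H q + g = (H pstar + g) + H δ := by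
      rw [hqe, map_add]; abel
    have h2 : ‖H q + g‖ ^ 2 = ‖H pstar + g‖ ^ 2 + 2 * ⟪H pstar + g, H δ⟫ + ‖H δ‖ ^ 2 := by
      rw [h1, norm_add_sq_real]
    have h3 : ‖q‖ ^ 2 = ‖pstar‖ ^ 2 + 2 * ⟪pstar, δ⟫ + ‖δ‖ ^ 2 := by
      rw [hqe, norm_add_sq_real]
    have h4 : ⟪a, δ⟫ = ⟪g, H δ⟫ := ContinuousLinearMap.adjoint_inner_left H δ g
    have h5 : ⟪M pstar, δ⟫ = ⟪H pstar, H δ⟫ + φ ^ 2 * ⟪pstar, δ⟫ := by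
      rw [hM, ContinuousLinearMap.add_apply, inner_add_left, ContinuousLinearMap.smul_apply,
        ContinuousLinearMap.one_apply, real_inner_smul_left, ContinuousLinearMap.mul_apply,
        ContinuousLinearMap.adjoint_inner_left]
    have h6 : ⟪M δ, δ⟫ = ‖H δ‖ ^ 2 + φ ^ 2 * ‖δ‖ ^ 2 := hQ δ
    rw [h2, h3, inner_add_left (𝕜 := ℝ) (x := M pstar), h5, h6, h4,
      inner_add_left (𝕜 := ℝ) (x := H pstar)]
    ring
  have hMpδ : ⟪M pstar + a, δ⟫ = -lam * ⟪u, δ⟫ := by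
    rw [hMp]
    have h : -a - lam • u + a = -(lam • u) := by abel
    rw [h, inner_neg_left, real_inner_smul_left]
    ring
  have hud : ⟪u, δ⟫ ≤ 0 := by
    have h : ⟪u, δ⟫ = ⟪q, u⟫ - ⟪pstar, u⟫ := by
      rw [hδ, inner_sub_right, real_inner_comm u q, real_inner_comm u pstar]
    rw [h, hpu]
    linarith
  have hQδ : 0 ≤ ⟪M δ, δ⟫ := by
    rcases eq_or_ne δ 0 with h | h
    · simp [h]
    · exact le_of_lt (hQpos δ h)
  have h7 : 0 ≤ -lam * ⟪u, δ⟫ := by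
    rw [neg_mul, ← mul_neg]
    exact mul_nonneg hlampos.le (neg_nonneg.mpr hud)
  constructor
  · rw [hexp, hMpδ]
    linarith
  · intro heq
    rw [hexp, hMpδ] at heq
    have h0 : (1 / 2) * ⟪M δ, δ⟫ + -lam * ⟪u, δ⟫ = 0 := by linarith
    have hz : ⟪M δ, δ⟫ = 0 := by linarith
    have hz2 : δ = 0 := hQzero δ hz
    have hz3 : q - pstar = 0 := hz2
    rw [sub_eq_zero] at hz3
    exact hz3
end

section
/- Let H be a symmetric d×d real matrix with ‖H‖ ≤ K, and suppose ‖Hq‖ ≥ γ‖q‖ for all q in the range of H, where K, γ > 0. If v ∈ range(H), g ∈ ℝ^d and ε ≥ 0 satisfy ‖H²v − Hg‖ ≤ ε‖Hg‖, then ‖v‖ ≤ ((γ + εK)/γ²)·‖g‖. -/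
open RealInnerProductSpace


/-- **Bound on the inexact Case 1 local direction** (from the proof of Theorem 2). If `H` is
symmetric with `‖H‖ ≤ K` and `‖Hq‖ ≥ γ‖q‖` on its range, and `v ∈ range H` satisfies the
residual bound `‖H²v − Hg‖ ≤ ε‖Hg‖`, then `‖v‖ ≤ ((γ + εK)/γ²)‖g‖`. -/
theorem stmt_19 {d : ℕ}
    (H : EuclideanSpace ℝ (Fin d) →L[ℝ] EuclideanSpace ℝ (Fin d))
    (hH : IsSelfAdjoint H) (K γ : ℝ) (hK : 0 < K) (hγ : 0 < γ)
    (hHK : ‖H‖ ≤ K)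
    (hreg : ∀ q ∈ LinearMap.range (H : EuclideanSpace ℝ (Fin d) →ₗ[ℝ] EuclideanSpace ℝ (Fin d)), γ * ‖q‖ ≤ ‖H q‖)
    (v g : EuclideanSpace ℝ (Fin d)) (hv : v ∈ LinearMap.range (H : EuclideanSpace ℝ (Fin d) →ₗ[ℝ] EuclideanSpace ℝ (Fin d)))
    (ε : ℝ) (hε : 0 ≤ ε)
    (hres : ‖H (H v) - H g‖ ≤ ε * ‖H g‖) :
    ‖v‖ ≤ (γ + ε * K) / γ ^ 2 * ‖g‖ := by
  classical
  set E := LinearMap.range (H : EuclideanSpace ℝ (Fin d) →ₗ[ℝ] EuclideanSpace ℝ (Fin d))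
    with hE
  have hmaps : ∀ x ∈ E, (H : EuclideanSpace ℝ (Fin d) →ₗ[ℝ] _) x ∈ E :=
    fun x _ => LinearMap.mem_range_self _ x
  set T : E →ₗ[ℝ] E := (H : EuclideanSpace ℝ (Fin d) →ₗ[ℝ] _).restrict hmaps with hT
  -- injectivity of H on its range
  have hnormzero : ∀ x ∈ E, H x = 0 → x = 0 := by
    intro x hx h0
    have h1 := hreg x hx
    rw [show H x = (0 : EuclideanSpace ℝ (Fin d)) from h0, norm_zero] at h1
    have : ‖x‖ = 0 := le_antisymm (by nlinarith [norm_nonneg x]) (norm_nonneg x)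
    exact norm_eq_zero.mp this
  have hTinj : Function.Injective T := by
    intro a b hab
    have h1 : H a.1 = H b.1 := congrArg Subtype.val hab
    have h2 : H (a.1 - b.1) = 0 := by rw [map_sub, h1, sub_self]
    have h3 := hnormzero _ (E.sub_mem a.2 b.2) h2
    exact Subtype.ext (sub_eq_zero.mp h3)
  have hTsurj : Function.Surjective T := LinearMap.injective_iff_surjective.mp hTinj
  have hsym := hH.isSymmetric
  -- get p ∈ E with H p = H g
  obtain ⟨p', hp'⟩ := hTsurj ⟨H g, LinearMap.mem_range_self _ g⟩
  have hp : H p'.1 = H g := congrArg Subtype.val hp'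
  -- p is the projection of g onto E : ‖p‖ ≤ ‖g‖
  have hpg : ‖p'.1‖ ≤ ‖g‖ := by
    obtain ⟨a, ha⟩ := p'.2
    have hker : H (p'.1 - g) = 0 := by rw [map_sub, hp, sub_self]
    have horth : ⟪p'.1 - g, p'.1⟫ = 0 := by
      have := hsym (p'.1 - g) a
      simp only [ContinuousLinearMap.coe_coe] at this
      rw [hker] at this
      simp only [inner_zero_left] at this
      rw [← ha] at this ⊢
      exact this.symm
    have hps : ‖p'.1‖ ^ 2 = ⟪g, p'.1⟫ := by
      have : ⟪p'.1, p'.1⟫ = ⟪g, p'.1⟫ + ⟪p'.1 - g, p'.1⟫ := by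
        rw [inner_sub_left]; ring
      rw [horth, add_zero] at this
      rw [← this, real_inner_self_eq_norm_sq]
    have hcs : ⟪g, p'.1⟫ ≤ ‖g‖ * ‖p'.1‖ := real_inner_le_norm g p'.1
    nlinarith [norm_nonneg p'.1, norm_nonneg g]
  -- get w ∈ E with H w = p
  obtain ⟨w', hw'⟩ := hTsurj p'
  have hw : H w'.1 = p'.1 := congrArg Subtype.val hw'
  set w := w'.1 with hwdef
  -- bound on ‖w‖
  have hbw : γ * ‖w‖ ≤ ‖g‖ := le_trans (by rw [← hw] at hpg; calc γ * ‖w‖ ≤ ‖H w‖ := hreg w w'.2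
    _ ≤ ‖g‖ := hpg) le_rfl
  -- bound on ‖v - w‖
  have hvw : v - w ∈ E := E.sub_mem hv w'.2
  have hHvw : H (v - w) ∈ E := LinearMap.mem_range_self _ _
  have h1 : γ * ‖v - w‖ ≤ ‖H (v - w)‖ := hreg _ hvw
  have h2 : γ * ‖H (v - w)‖ ≤ ‖H (H (v - w))‖ := hreg _ hHvw
  have h3 : H (H (v - w)) = H (H v) - H g := by
    rw [map_sub, map_sub, hw, hp]
  have hHg : ‖H g‖ ≤ K * ‖g‖ :=
    le_trans (H.le_opNorm g) (mul_le_mul_of_nonneg_right hHK (norm_nonneg g))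
  have h4 : ‖H (H (v - w))‖ ≤ ε * (K * ‖g‖) := by
    rw [h3]
    exact le_trans hres (mul_le_mul_of_nonneg_left hHg hε)
  have hvwb : γ * (γ * ‖v - w‖) ≤ ε * (K * ‖g‖) :=
    le_trans (mul_le_mul_of_nonneg_left h1 hγ.le) (le_trans h2 h4)
  -- combine
  have htri : ‖v‖ ≤ ‖w‖ + ‖v - w‖ := by
    have := norm_add_le w (v - w)
    simpa using this
  rw [div_mul_eq_mul_div, le_div_iff₀ (by positivity)]
  nlinarith [norm_nonneg (v - w), norm_nonneg w, norm_nonneg g, mul_nonneg hε (norm_nonneg g)]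
end
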